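/- arXiv:2403.03380 — 5 statements merged into one kernel-verified Lean document; each statement's English description precedes it below -/
import Mathlib

section
/- Under the stated assumptions, the infimum over all Borel-measurable estimators φ : E → 𝒜 of the expected loss E[L(Y, φ(X))] equals the integral ∫_E ( inf_{a ∈ 𝒜} ∫_ℝ L(y, a) dκ(x)(y) ) d(P ∘ X⁻¹)(x), where κ is a regular conditional distribution of Y given X (Mathlib's condDistrib). In other words, the minimum estimation error based on X equals the L-conditional entropy H_L(Y | X). -/
/-!
Conditioning on `X` disintegrates the expected loss of an estimator `φ` as
`∫ g(x, φ x) d(P ∘ X⁻¹)(x)`, where `g(x, a) = ∫ L(y, a) dκ(x)(y)` is the conditional risk of the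
action `a`. Pointwise `g(x, φ x) ≥ inf_a g(x, a)`, giving one inequality. For the other, `g` is
continuous in `a`, so the infimum over `𝒜` is an infimum over a dense sequence `aₙ`; choosing at
each `x` the first `n` with `g(x, aₙ) < inf_a g(x, a) + ε` gives a measurable `ε`-optimal estimator.
-/

open MeasureTheory ProbabilityTheory Set TopologicalSpace Function

section Infimum

theorem bddBelow_range_of_norm_le {ι : Sort*} {f : ι → ℝ} {C : ℝ} (hC : ∀ i, ‖f i‖ ≤ C) :
    BddBelow (range f) :=
  ⟨-C, forall_mem_range.2 fun i => neg_le_of_abs_le (hC i)⟩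

theorem norm_iInf_le_of_norm_le {ι : Sort*} [Nonempty ι] {f : ι → ℝ} {C : ℝ}
    (hC : ∀ i, ‖f i‖ ≤ C) : ‖⨅ i, f i‖ ≤ C := by
  obtain ⟨i₀⟩ := ‹Nonempty ι›
  refine abs_le.mpr ⟨le_ciInf fun i => neg_le_of_abs_le (hC i), ?_⟩
  exact (ciInf_le (bddBelow_range_of_norm_le hC) i₀).trans (le_of_abs_le (hC i₀))

theorem Continuous.iInf_comp_denseSeq {𝒜 : Type*} [TopologicalSpace 𝒜] [SeparableSpace 𝒜]
    [Nonempty 𝒜] {f : 𝒜 → ℝ} (hf : Continuous f) : ⨅ n, f (denseSeq 𝒜 n) = ⨅ a, f a := by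
  rw [← (denseRange_denseSeq 𝒜).ciInf' hf, ← rangeFactorization_surjective.iInf_comp]
  rfl

end Infimum

section Selection

variable {E : Type*} [MeasurableSpace E]

theorem exists_measurable_lt_iInf_add {g : ℕ → E → ℝ} (hg : ∀ n, Measurable (g n)) {ε : ℝ}
    (hε : 0 < ε) : ∃ N : E → ℕ, Measurable N ∧ ∀ x, g (N x) x < (⨅ n, g n x) + ε := by
  classical
  have hex : ∀ x, ∃ n, g n x < (⨅ n, g n x) + ε := fun x =>
    exists_lt_of_ciInf_lt (lt_add_of_pos_right _ hε)
  refine ⟨fun x => Nat.find (hex x), measurable_find hex fun n => ?_,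
    fun x => Nat.find_spec (hex x)⟩
  exact measurableSet_lt (hg n) ((Measurable.iInf hg).add_const ε)

variable {𝒜 : Type*} [TopologicalSpace 𝒜] [SeparableSpace 𝒜] [Nonempty 𝒜] {g : E → 𝒜 → ℝ}

theorem measurable_iInf_of_continuous (hg : ∀ a, Measurable fun x => g x a)
    (hcont : ∀ x, Continuous (g x)) : Measurable fun x => ⨅ a, g x a := by
  simp_rw [← (hcont _).iInf_comp_denseSeq]
  exact Measurable.iInf fun n => hg _

theorem iInf_integral_comp_eq_integral_iInf [MeasurableSpace 𝒜] (ν : Measure E)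
    [IsFiniteMeasure ν] (hg : Measurable (uncurry g)) (hcont : ∀ x, Continuous (g x)) {C : ℝ}
    (hC : ∀ x a, ‖g x a‖ ≤ C) :
    ⨅ φ : {φ : E → 𝒜 // Measurable φ}, ∫ x, g x (φ.1 x) ∂ν = ∫ x, ⨅ a, g x a ∂ν := by
  have hmeas (a : 𝒜) : Measurable fun x => g x a := hg.of_uncurry_right
  have hint {φ : E → 𝒜} (hφ : Measurable φ) : Integrable (fun x => g x (φ x)) ν :=
    .of_bound (hg.comp (measurable_id.prodMk hφ)).aestronglyMeasurable C
      (ae_of_all _ fun x => hC x _)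
  have hint_inf : Integrable (fun x => ⨅ a, g x a) ν :=
    .of_bound (measurable_iInf_of_continuous hmeas hcont).aestronglyMeasurable C
      (ae_of_all _ fun x => norm_iInf_le_of_norm_le (hC x))
  have hlower (φ : {φ : E → 𝒜 // Measurable φ}) :
      ∫ x, ⨅ a, g x a ∂ν ≤ ∫ x, g x (φ.1 x) ∂ν :=
    integral_mono hint_inf (hint φ.2) fun x => ciInf_le (bddBelow_range_of_norm_le (hC x)) _
  have : Nonempty {φ : E → 𝒜 // Measurable φ} := ⟨⟨fun _ => denseSeq 𝒜 0, measurable_const⟩⟩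
  refine le_antisymm (le_of_forall_pos_le_add fun δ hδ => ?_) (le_ciInf hlower)
  set ε := δ / (ν.real univ + 1)
  obtain ⟨N, hN, hNlt⟩ := exists_measurable_lt_iInf_add (fun n => hmeas (denseSeq 𝒜 n))
    (ε := ε) (by positivity)
  have hφ : Measurable fun x => denseSeq 𝒜 (N x) := measurable_from_nat.comp hN
  calc ⨅ φ : {φ : E → 𝒜 // Measurable φ}, ∫ x, g x (φ.1 x) ∂ν
      ≤ ∫ x, g x (denseSeq 𝒜 (N x)) ∂ν := ciInf_le ⟨_, forall_mem_range.2 hlower⟩ ⟨_, hφ⟩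
    _ ≤ ∫ x, ((⨅ a, g x a) + ε) ∂ν :=
        integral_mono (hint hφ) (hint_inf.add (integrable_const ε)) fun x => by
          simpa only [(hcont x).iInf_comp_denseSeq] using (hNlt x).le
    _ = ∫ x, ⨅ a, g x a ∂ν + ε * ν.real univ := by
        rw [integral_add hint_inf (integrable_const ε), integral_const, smul_eq_mul, mul_comm]
    _ ≤ ∫ x, ⨅ a, g x a ∂ν + δ := by
        have : ε * ν.real univ ≤ δ := by
          rw [div_mul_eq_mul_div, div_le_iff₀ (by positivity)]
          nlinarith [measureReal_nonneg (μ := ν) (s := univ)]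
        linarith

end Selection

section ConditionalRisk

variable {E β 𝒜 : Type*} [MeasurableSpace E] [MeasurableSpace β] [MeasurableSpace 𝒜]
  {ℓ : β × 𝒜 → ℝ}

theorem integral_comp_eq_integral_integral_condDistrib {Ω G : Type*} [MeasurableSpace Ω]
    [StandardBorelSpace β] [Nonempty β] [NormedAddCommGroup G] [NormedSpace ℝ G]
    {P : Measure Ω} [IsFiniteMeasure P] {Y : Ω → β} {X : Ω → E} (hY : AEMeasurable Y P)
    (hX : AEMeasurable X P) {F : E × β → G} (hF : Integrable F (P.map fun ω => (X ω, Y ω))) :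
    ∫ ω, F (X ω, Y ω) ∂P = ∫ x, ∫ y, F (x, y) ∂condDistrib Y X P x ∂P.map X := by
  rw [← integral_map (hX.prodMk hY) hF.aestronglyMeasurable]
  rw [← compProd_map_condDistrib hY] at hF ⊢
  exact Measure.integral_compProd hF

theorem measurable_uncurry_integral_kernel (κ : Kernel E β) [IsSFiniteKernel κ]
    (hℓ : Measurable ℓ) : Measurable (uncurry fun x a => ∫ y, ℓ (y, a) ∂κ x) :=
  (hℓ.comp (measurable_snd.prodMk (measurable_snd.comp measurable_fst))).stronglyMeasurable
    |>.integral_kernel_prod_right' (κ := κ.comap Prod.fst measurable_fst) |>.measurable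

theorem continuous_integral_of_norm_le [TopologicalSpace 𝒜] [FirstCountableTopology 𝒜]
    (μ : Measure β) [IsFiniteMeasure μ] (hℓ : Measurable ℓ) {C : ℝ} (hC : ∀ y a, ‖ℓ (y, a)‖ ≤ C)
    (hcont : ∀ y, Continuous fun a => ℓ (y, a)) : Continuous fun a => ∫ y, ℓ (y, a) ∂μ :=
  continuous_of_dominated
    (fun _ => (hℓ.comp (measurable_id.prodMk measurable_const)).aestronglyMeasurable)
    (fun a => ae_of_all _ (hC · a)) (integrable_const C) (ae_of_all _ hcont)

end ConditionalRisk

theorem min_estimation_error_eq_L_conditional_entropy_general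
    {Ω E 𝒜 : Type*} [MeasurableSpace Ω]
    [MeasurableSpace E]
    [MetricSpace 𝒜] [CompactSpace 𝒜] [Nonempty 𝒜]
    [MeasurableSpace 𝒜]
    (P : Measure Ω) [IsProbabilityMeasure P]
    (Y : Ω → ℝ) (X : Ω → E) (hY : Measurable Y) (hX : Measurable X)
    (L : ℝ × 𝒜 → ℝ) (hLmeas : Measurable L)
    (hLbdd : ∃ C : ℝ, ∀ y a, |L (y, a)| ≤ C)
    (hLcont : ∀ y : ℝ, Continuous fun a => L (y, a)) :
    (⨅ φ : {φ : E → 𝒜 // Measurable φ}, ∫ ω, L (Y ω, φ.1 (X ω)) ∂P)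
      = ∫ x, (⨅ a : 𝒜, ∫ y, L (y, a) ∂(condDistrib Y X P x)) ∂(P.map X) := by
  obtain ⟨C, hC⟩ := hLbdd
  have hLC : ∀ y a, ‖L (y, a)‖ ≤ C := hC
  have hdisintegrate (φ : {φ : E → 𝒜 // Measurable φ}) :
      ∫ ω, L (Y ω, φ.1 (X ω)) ∂P = ∫ x, ∫ y, L (y, φ.1 x) ∂condDistrib Y X P x ∂P.map X :=
    integral_comp_eq_integral_integral_condDistrib hY.aemeasurable hX.aemeasurable
      (F := fun p => L (p.2, φ.1 p.1)) <| .of_bound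
        (hLmeas.comp (measurable_snd.prodMk (φ.2.comp measurable_fst))).aestronglyMeasurable C
        (ae_of_all _ fun p => hLC _ _)
  rw [iInf_congr hdisintegrate]
  exact iInf_integral_comp_eq_integral_iInf (C := C) _
    (measurable_uncurry_integral_kernel _ hLmeas)
    (fun _ => continuous_integral_of_norm_le _ hLmeas hLC hLcont)
    fun _ a => (norm_integral_le_of_norm_le_const (ae_of_all _ (hLC · a))).trans (by simp)

/-- The minimum expected loss over all Borel-measurable estimators
`φ : E → 𝒜` of `Y` based on `X` equals the `L`-conditional entropy
`H_L(Y | X) = ∫ (inf_a ∫ L(y,a) dκ(x)(y)) d(P ∘ X⁻¹)(x)`, where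
`κ = condDistrib Y X P` is the regular conditional distribution of `Y` given `X`. -/
theorem min_estimation_error_eq_L_conditional_entropy
    {Ω E 𝒜 : Type*} [MeasurableSpace Ω]
    [MeasurableSpace E] [StandardBorelSpace E]
    [MetricSpace 𝒜] [CompactSpace 𝒜] [Nonempty 𝒜]
    [MeasurableSpace 𝒜] [BorelSpace 𝒜]
    (P : Measure Ω) [IsProbabilityMeasure P]
    (Y : Ω → ℝ) (X : Ω → E) (hY : Measurable Y) (hX : Measurable X)
    (L : ℝ × 𝒜 → ℝ) (hLmeas : Measurable L)
    (hLbdd : ∃ C : ℝ, ∀ y a, |L (y, a)| ≤ C)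
    (hLcont : ∀ y : ℝ, Continuous fun a => L (y, a)) :
    (⨅ φ : {φ : E → 𝒜 // Measurable φ}, ∫ ω, L (Y ω, φ.1 (X ω)) ∂P)
      = ∫ x, (⨅ a : 𝒜, ∫ y, L (y, a) ∂(condDistrib Y X P x)) ∂(P.map X) :=
  min_estimation_error_eq_L_conditional_entropy_general P Y X hY hX L hLmeas hLbdd hLcont
end

section
/- Data processing inequality for L-conditional entropy: let Y : Ω → ℝ, X : Ω → E₁, Z : Ω → E₂ be random elements of standard Borel spaces such that σ(Y) and σ(Z) are conditionally independent given σ(X) (i.e., Y ↔ X ↔ Z is a Markov chain). Then (i) H_L(Y | (X, Z)) = H_L(Y | X), and (ii) H_L(Y | Z) ≥ H_L(Y | X), where H_L(Y | W) denotes the infimum of E[L(Y, φ(W))] over Borel-measurable estimators φ. -/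
open MeasureTheory ProbabilityTheory

/-- The `L`-conditional entropy `H_L(Y | W)`: the infimum over Borel-measurable estimators
`φ : E → 𝒜` of the expected loss `E[L(Y, φ(W))]`. -/
noncomputable def HL {Ω E 𝒜 : Type*} [MeasurableSpace Ω] [MeasurableSpace E]
    [MeasurableSpace 𝒜] (P : Measure Ω) (L : ℝ × 𝒜 → ℝ) (Y : Ω → ℝ) (W : Ω → E) : ℝ :=
  ⨅ φ : {φ : E → 𝒜 // Measurable φ}, ∫ ω, L (Y ω, φ.1 (W ω)) ∂P

/-!
Estimators of `X` or of `Z` are estimators of `(X, Z)`, so `H_L(Y | (X, Z))` is at most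
`H_L(Y | X)` and `H_L(Y | Z)`. Conversely, the Markov condition says that the conditional law of
`Y` given `(X, Z)` is `condDistrib Y X P` evaluated at `X`, so the risk of an estimator `φ (X, Z)`
is `E[G (X, φ (X, Z))]` with `G (x, a) = ∫ L (y, a) d(condDistrib Y X P x)`. Since `G` is
continuous in `a` and `𝒜` is separable, `G (x, ·)` has a measurable `ε`-minimiser `ψ`, and the
estimator `ψ X` is then within `ε` of `φ (X, Z)`.
-/

open Set

theorem bddBelow_range_of_abs_le {α : Type*} {f : α → ℝ} {C : ℝ} (h : ∀ x, |f x| ≤ C) :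
    BddBelow (range f) :=
  ⟨-C, by rintro _ ⟨x, rfl⟩; exact neg_le_of_abs_le (h x)⟩

theorem exists_measurable_le_add_of_continuous {E 𝒜 : Type*} [MeasurableSpace E]
    [TopologicalSpace 𝒜] [TopologicalSpace.SeparableSpace 𝒜] [Nonempty 𝒜] [MeasurableSpace 𝒜]
    {G : E × 𝒜 → ℝ} (hG : Measurable G) (hGc : ∀ x, Continuous fun a => G (x, a))
    (hbdd : ∀ x, BddBelow (range fun a => G (x, a))) {ε : ℝ} (hε : 0 < ε) :
    ∃ ψ : E → 𝒜, Measurable ψ ∧ ∀ x a, G (x, ψ x) ≤ G (x, a) + ε := by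
  obtain ⟨u, hu⟩ := TopologicalSpace.exists_dense_seq 𝒜
  -- Continuity in `a` lets the infimum over `𝒜` be taken along the dense sequence `u`,
  -- which makes it measurable in `x`.
  set m : E → ℝ := fun x => ⨅ n, G (x, u n)
  have hGu : ∀ n, Measurable fun x => G (x, u n) := fun n =>
    hG.comp (measurable_id.prodMk measurable_const)
  have hm_le : ∀ x a, m x ≤ G (x, a) := fun x a =>
    hu.induction_on (p := fun a => m x ≤ G (x, a)) a (isClosed_le continuous_const (hGc x))
      fun n => ciInf_le ((hbdd x).mono (range_comp_subset_range u _)) n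
  have hex : ∀ x, ∃ n, G (x, u n) < m x + ε := fun x =>
    exists_lt_of_ciInf_lt (lt_add_of_pos_right _ hε)
  refine ⟨fun x => u (Nat.find (hex x)), ?_, fun x a => ?_⟩
  · exact (measurable_from_nat (f := u)).comp <| measurable_find hex fun n =>
      measurableSet_lt (hGu n) ((Measurable.iInf hGu).add_const ε)
  · exact (Nat.find_spec (hex x)).le.trans (by linarith [hm_le x a])

section kernelRisk

variable {E 𝒜 : Type*} [MeasurableSpace E]

noncomputable def kernelRisk (κ : Kernel E ℝ) (L : ℝ × 𝒜 → ℝ) (p : E × 𝒜) : ℝ :=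
  ∫ y, L (y, p.2) ∂κ p.1

variable {κ : Kernel E ℝ} {L : ℝ × 𝒜 → ℝ}

theorem measurable_kernelRisk [MeasurableSpace 𝒜] [IsSFiniteKernel κ] (hL : Measurable L) :
    Measurable (kernelRisk κ L) :=
  (StronglyMeasurable.integral_kernel_prod_right (κ := κ.comap Prod.fst measurable_fst)
    (f := fun p y => L (y, p.2))
    (hL.comp (measurable_snd.prodMk measurable_fst.snd)).stronglyMeasurable).measurable

theorem continuous_kernelRisk [TopologicalSpace 𝒜] [FirstCountableTopology 𝒜] [MeasurableSpace 𝒜]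
    [IsFiniteKernel κ] (hL : Measurable L) {C : ℝ} (hLC : ∀ p, |L p| ≤ C)
    (hLc : ∀ y, Continuous fun a => L (y, a)) (x : E) :
    Continuous fun a => kernelRisk κ L (x, a) :=
  continuous_of_dominated (F := fun a y => L (y, a)) (μ := κ x) (bound := fun _ => C)
    (fun _ => (hL.comp (measurable_id.prodMk measurable_const)).aestronglyMeasurable)
    (fun a => ae_of_all _ fun y => hLC (y, a)) (integrable_const C) (ae_of_all _ hLc)

theorem abs_kernelRisk_le [IsMarkovKernel κ] {C : ℝ} (hLC : ∀ p, |L p| ≤ C) (p : E × 𝒜) :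
    |kernelRisk κ L p| ≤ C := by
  simpa [kernelRisk, Real.norm_eq_abs] using norm_integral_le_of_norm_le_const (μ := κ p.1)
    (ae_of_all _ fun y => (Real.norm_eq_abs _).trans_le (hLC (y, p.2)))

end kernelRisk

section HL

variable {Ω E 𝒜 : Type*} [MeasurableSpace Ω] [MeasurableSpace E] [MeasurableSpace 𝒜]
  {P : Measure Ω} {L : ℝ × 𝒜 → ℝ} {Y : Ω → ℝ} {W : Ω → E}

theorem HL_le_integral [IsProbabilityMeasure P] (hL : BddBelow (range L)) {φ : E → 𝒜}
    (hφ : Measurable φ) : HL P L Y W ≤ ∫ ω, L (Y ω, φ (W ω)) ∂P := by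
  obtain ⟨C, hC⟩ := hL
  refine ciInf_le (f := fun ψ : {ψ : E → 𝒜 // Measurable ψ} => ∫ ω, L (Y ω, ψ.1 (W ω)) ∂P)
    ⟨min C 0, ?_⟩ ⟨φ, hφ⟩
  rintro _ ⟨ψ, rfl⟩
  by_cases hint : Integrable (fun ω => L (Y ω, ψ.1 (W ω))) P
  · calc min C 0 ≤ ∫ _, C ∂P := by simp
      _ ≤ _ := integral_mono (integrable_const C) hint fun _ => hC (mem_range_self _)
  · simp [integral_undef hint]

theorem le_HL [Nonempty 𝒜] {c : ℝ}
    (h : ∀ φ : E → 𝒜, Measurable φ → c ≤ ∫ ω, L (Y ω, φ (W ω)) ∂P) : c ≤ HL P L Y W :=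
  have : Nonempty {φ : E → 𝒜 // Measurable φ} :=
    ⟨⟨fun _ => Classical.arbitrary 𝒜, measurable_const⟩⟩
  le_ciInf fun φ => h φ.1 φ.2

theorem HL_le_HL_comp [IsProbabilityMeasure P] [Nonempty 𝒜] (hL : BddBelow (range L))
    {E' : Type*} [MeasurableSpace E'] {g : E → E'} (hg : Measurable g) :
    HL P L Y W ≤ HL P L Y (fun ω => g (W ω)) :=
  le_HL fun _ hφ => HL_le_integral hL (hφ.comp hg)

theorem integral_loss_eq_integral_kernelRisk [IsProbabilityMeasure P]
    {κ : Kernel E ℝ} [IsMarkovKernel κ] (hY : Measurable Y) (hW : Measurable W)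
    (hκ : P.map (fun ω => (W ω, Y ω)) = P.map W ⊗ₘ κ) (hL : Measurable L) {C : ℝ}
    (hLC : ∀ p, |L p| ≤ C) {φ : E → 𝒜} (hφ : Measurable φ) :
    ∫ ω, L (Y ω, φ (W ω)) ∂P = ∫ w, kernelRisk κ L (w, φ w) ∂P.map W := by
  have hLφ : Measurable fun q : E × ℝ => L (q.2, φ q.1) :=
    hL.comp (measurable_snd.prodMk (hφ.comp measurable_fst))
  have : IsProbabilityMeasure (P.map W) := Measure.isProbabilityMeasure_map hW.aemeasurable
  rw [← integral_map (f := fun q : E × ℝ => L (q.2, φ q.1)) (hW.prodMk hY).aemeasurable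
    hLφ.aestronglyMeasurable, hκ, Measure.integral_compProd]
  · rfl
  · exact Integrable.of_bound hLφ.aestronglyMeasurable C (ae_of_all _ fun q => hLC _)

theorem HL_comp_le_HL_of_map_prod_eq_compProd [IsProbabilityMeasure P] [TopologicalSpace 𝒜]
    [TopologicalSpace.SeparableSpace 𝒜] [FirstCountableTopology 𝒜] [Nonempty 𝒜]
    {E₁ : Type*} [MeasurableSpace E₁] {f : E → E₁} (hf : Measurable f)
    {κ : Kernel E₁ ℝ} [IsMarkovKernel κ] (hY : Measurable Y) (hW : Measurable W)
    (hκ : P.map (fun ω => (W ω, Y ω)) = P.map W ⊗ₘ κ.comap f hf) (hL : Measurable L) {C : ℝ}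
    (hLC : ∀ p, |L p| ≤ C) (hLc : ∀ y, Continuous fun a => L (y, a)) :
    HL P L Y (fun ω => f (W ω)) ≤ HL P L Y W := by
  have : IsProbabilityMeasure (P.map W) := Measure.isProbabilityMeasure_map hW.aemeasurable
  have hG := measurable_kernelRisk (κ := κ) hL
  have hGC := abs_kernelRisk_le (κ := κ) hLC
  have hintegrable : ∀ {φ : E → 𝒜}, Measurable φ →
      Integrable (fun w => kernelRisk κ L (f w, φ w)) (P.map W) := fun hφ =>
    Integrable.of_bound (hG.comp (hf.prodMk hφ)).aestronglyMeasurable C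
      (ae_of_all _ fun _ => hGC _)
  refine le_of_forall_pos_le_add fun ε hε => sub_le_iff_le_add.mp <| le_HL fun φ hφ => ?_
  obtain ⟨ψ, hψ, hψ_le⟩ := exists_measurable_le_add_of_continuous hG
    (continuous_kernelRisk hL hLC hLc) (fun _ => bddBelow_range_of_abs_le fun _ => hGC _) hε
  calc HL P L Y (fun ω => f (W ω)) - ε
      ≤ ∫ ω, L (Y ω, ψ (f (W ω))) ∂P - ε :=
        sub_le_sub_right (HL_le_integral (bddBelow_range_of_abs_le hLC) hψ) ε
    _ = ∫ w, kernelRisk κ L (f w, ψ (f w)) ∂P.map W - ε := by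
      congr 1; exact integral_loss_eq_integral_kernelRisk hY hW hκ hL hLC (hψ.comp hf)
    _ ≤ ∫ w, (kernelRisk κ L (f w, φ w) + ε) ∂P.map W - ε :=
      sub_le_sub_right (integral_mono (hintegrable (hψ.comp hf))
        ((hintegrable hφ).add (integrable_const ε)) fun w => hψ_le (f w) (φ w)) ε
    _ = ∫ ω, L (Y ω, φ (W ω)) ∂P := by
      rw [integral_add (hintegrable hφ) (integrable_const ε),
        integral_loss_eq_integral_kernelRisk hY hW hκ hL hLC hφ, integral_const,
        probReal_univ, one_smul, add_sub_cancel_right]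
      rfl

end HL

theorem map_prod_eq_compProd_prodMkRight_of_condIndep {Ω E₁ E₂ : Type*} [MeasurableSpace Ω]
    [StandardBorelSpace Ω] [MeasurableSpace E₁] [MeasurableSpace E₂] [StandardBorelSpace E₂]
    {P : Measure Ω} [IsProbabilityMeasure P] {Y : Ω → ℝ} {X : Ω → E₁} {Z : Ω → E₂}
    (hY : Measurable Y) (hX : Measurable X) (hZ : Measurable Z)
    (hMarkov : CondIndep (MeasurableSpace.comap X inferInstance)
      (MeasurableSpace.comap Y inferInstance) (MeasurableSpace.comap Z inferInstance)
      hX.comap_le P) :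
    P.map (fun ω => ((X ω, Z ω), Y ω))
      = P.map (fun ω => (X ω, Z ω)) ⊗ₘ (condDistrib Y X P).prodMkRight E₂ := by
  have : Nonempty E₂ := (nonempty_of_isProbabilityMeasure P).map Z
  have hcond := (condIndepFun_iff_condDistrib_prod_ae_eq_prodMkRight hY hZ hX).mp
    ((condIndepFun_iff_condIndep _ _ _ _ _).mpr hMarkov.symm)
  rw [← Measure.compProd_congr hcond, compProd_map_condDistrib hY.aemeasurable]

theorem HL_data_processing_general
    {Ω E₁ E₂ 𝒜 : Type*} [MeasurableSpace Ω] [StandardBorelSpace Ω]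
    [MeasurableSpace E₁]
    [MeasurableSpace E₂] [StandardBorelSpace E₂]
    [MetricSpace 𝒜] [CompactSpace 𝒜] [Nonempty 𝒜] [MeasurableSpace 𝒜]
    (P : Measure Ω) [IsProbabilityMeasure P]
    (Y : Ω → ℝ) (X : Ω → E₁) (Z : Ω → E₂)
    (hY : Measurable Y) (hX : Measurable X) (hZ : Measurable Z)
    (L : ℝ × 𝒜 → ℝ) (hLmeas : Measurable L)
    (hLbdd : ∃ C : ℝ, ∀ y a, |L (y, a)| ≤ C)
    (hLcont : ∀ y : ℝ, Continuous fun a => L (y, a))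
    (hMarkov : CondIndep (MeasurableSpace.comap X inferInstance)
      (MeasurableSpace.comap Y inferInstance) (MeasurableSpace.comap Z inferInstance)
      hX.comap_le P) :
    HL P L Y (fun ω => (X ω, Z ω)) = HL P L Y X ∧ HL P L Y Z ≥ HL P L Y X := by
  obtain ⟨C, hC⟩ := hLbdd
  have hLC : ∀ p, |L p| ≤ C := fun p => hC p.1 p.2
  have hLbdd : BddBelow (range L) := bddBelow_range_of_abs_le hLC
  have hXZ_le_X : HL P L Y (fun ω => (X ω, Z ω)) ≤ HL P L Y X :=
    HL_le_HL_comp hLbdd measurable_fst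
  have hX_le_XZ : HL P L Y X ≤ HL P L Y (fun ω => (X ω, Z ω)) :=
    HL_comp_le_HL_of_map_prod_eq_compProd measurable_fst hY (hX.prodMk hZ)
      (map_prod_eq_compProd_prodMkRight_of_condIndep hY hX hZ hMarkov) hLmeas hLC hLcont
  exact ⟨le_antisymm hXZ_le_X hX_le_XZ, hX_le_XZ.trans (HL_le_HL_comp hLbdd measurable_snd)⟩

/-- Data processing inequality for the `L`-conditional entropy: if
`σ(Y)` and `σ(Z)` are conditionally independent given `σ(X)` (i.e. `Y ↔ X ↔ Z` is a
Markov chain), then (i) `H_L(Y | (X, Z)) = H_L(Y | X)` and (ii) `H_L(Y | Z) ≥ H_L(Y | X)`. -/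
theorem HL_data_processing
    {Ω E₁ E₂ 𝒜 : Type*} [MeasurableSpace Ω] [StandardBorelSpace Ω]
    [MeasurableSpace E₁] [StandardBorelSpace E₁]
    [MeasurableSpace E₂] [StandardBorelSpace E₂]
    [MetricSpace 𝒜] [CompactSpace 𝒜] [Nonempty 𝒜] [MeasurableSpace 𝒜] [BorelSpace 𝒜]
    (P : Measure Ω) [IsProbabilityMeasure P]
    (Y : Ω → ℝ) (X : Ω → E₁) (Z : Ω → E₂)
    (hY : Measurable Y) (hX : Measurable X) (hZ : Measurable Z)
    (L : ℝ × 𝒜 → ℝ) (hLmeas : Measurable L)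
    (hLbdd : ∃ C : ℝ, ∀ y a, |L (y, a)| ≤ C)
    (hLcont : ∀ y : ℝ, Continuous fun a => L (y, a))
    (hMarkov : CondIndep (MeasurableSpace.comap X inferInstance)
      (MeasurableSpace.comap Y inferInstance) (MeasurableSpace.comap Z inferInstance)
      hX.comap_le P) :
    HL P L Y (fun ω => (X ω, Z ω)) = HL P L Y X ∧ HL P L Y Z ≥ HL P L Y X :=
  HL_data_processing_general P Y X Z hY hX hZ L hLmeas hLbdd hLcont hMarkov
end

section
/- Exact-Markov case of the information-aging lemma: let (X_s)_{s ∈ ℤ} be a family of real random variables, Y : Ω → ℝ a random variable, l ≥ 1, and X^l_s := (X_s, X_{s−1}, …, X_{s−l+1}) ∈ ℝ^l. Suppose that for every μ, ν ≥ 0 the σ-algebras σ(Y) and σ(X^l_{t−μ−ν}) are conditionally independent given σ(X^l_{t−μ}). Then for every δ ≥ 0: H_L(Y | X^l_{t−δ}) = H_L(Y | X^l_t) + Σ_{k=0}^{δ−1} I_L(Y; X^l_{t−k} | X^l_{t−k−1}), where I_L(Y; U | V) := H_L(Y | V) − H_L(Y | (U, V)) ≥ 0; in particular, the map δ ↦ H_L(Y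 | X^l_{t−δ}) is non-decreasing on ℕ. -/
/-
Disintegrating along `κ = condDistrib Y W P`, the `L`-entropy `H_L(Y | W)` is the expected Bayes
risk `E[inf_a ∫ L(y, a) dκ(W)(y)]`: every estimator does at least this badly pointwise, and an
estimator that is `ε`-optimal everywhere is obtained by picking, measurably in `w`, the first
`ε`-optimal point of a dense sequence of actions, which suffices because the risk is continuous in
the action. The Markov hypothesis with `ν = 1` makes the conditional law of `Y` given
`(X^l_{t-k}, X^l_{t-k-1})` almost surely equal to its law given `X^l_{t-k}` alone, so both Bayes
risks agree and `H_L(Y | X^l_{t-k}, X^l_{t-k-1}) = H_L(Y | X^l_{t-k})`. The sum therefore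
telescopes, and each of its terms is nonnegative because extra information can only lower `H_L`.
-/

open MeasureTheory ProbabilityTheory

open Filter Function Set TopologicalSpace

lemma abs_ciInf_le_of_forall_abs_le {ι : Type*} [Nonempty ι] {f : ι → ℝ} {C : ℝ}
    (h : ∀ i, |f i| ≤ C) : |⨅ i, f i| ≤ C :=
  abs_le.2 ⟨le_ciInf fun i => (abs_le.1 (h i)).1,
    (ciInf_le ⟨-C, forall_mem_range.2 fun i => (abs_le.1 (h i)).1⟩ (Classical.arbitrary ι)).trans
      (abs_le.1 (h _)).2⟩

lemma abs_integral_le_of_forall_abs_le {α : Type*} [MeasurableSpace α] {μ : Measure α}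
    [IsProbabilityMeasure μ] {f : α → ℝ} {C : ℝ} (h : ∀ x, |f x| ≤ C) : |∫ x, f x ∂μ| ≤ C := by
  simpa using norm_integral_le_of_norm_le_const (μ := μ)
    (Eventually.of_forall fun x => (Real.norm_eq_abs (f x)).trans_le (h x))

lemma Measurable.integrable_of_forall_abs_le {α : Type*} [MeasurableSpace α] {μ : Measure α}
    [IsFiniteMeasure μ] {f : α → ℝ} (hf : Measurable f) {C : ℝ} (h : ∀ x, |f x| ≤ C) :
    Integrable f μ :=
  .of_bound hf.aestronglyMeasurable C (Eventually.of_forall h)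

lemma DenseRange.ciInf_comp {α β ι : Type*} [TopologicalSpace α]
    [ConditionallyCompleteLinearOrder β] [TopologicalSpace β] [OrderClosedTopology β] [Nonempty ι]
    {a : ι → α} (ha : DenseRange a) {g : α → β} (hg : Continuous g) (hbdd : BddBelow (range g)) :
    ⨅ i, g (a i) = ⨅ x, g x := by
  have : Nonempty α := ⟨a (Classical.arbitrary ι)⟩
  refine le_antisymm (le_ciInf fun x => ?_) (le_ciInf fun i => ciInf_le hbdd (a i))
  by_contra! hx
  obtain ⟨i, hi⟩ := ha.exists_mem_open (isOpen_lt hg continuous_const) ⟨x, hx⟩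
  exact (ciInf_le (hbdd.mono (range_comp_subset_range a g)) i).not_gt hi

lemma measurable_iInf_of_continuous_s6 {E 𝒜 : Type*} [MeasurableSpace E] [TopologicalSpace 𝒜]
    [SeparableSpace 𝒜] [Nonempty 𝒜] {f : E → 𝒜 → ℝ} (hf : ∀ a, Measurable fun u => f u a)
    (hcont : ∀ u, Continuous (f u)) (hbdd : ∀ u, BddBelow (range (f u))) :
    Measurable fun u => ⨅ a, f u a := by
  simp_rw [← (denseRange_denseSeq 𝒜).ciInf_comp (hcont _) (hbdd _)]
  exact .iInf fun n => hf _

theorem exists_measurable_lt_iInf_add_s6 {E 𝒜 : Type*} [MeasurableSpace E] [MeasurableSpace 𝒜]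
    [TopologicalSpace 𝒜] [SeparableSpace 𝒜] [Nonempty 𝒜] {f : E → 𝒜 → ℝ}
    (hf : ∀ a, Measurable fun u => f u a) (hcont : ∀ u, Continuous (f u))
    (hbdd : ∀ u, BddBelow (range (f u))) {ε : ℝ} (hε : 0 < ε) :
    ∃ φ : E → 𝒜, Measurable φ ∧ ∀ u, f u (φ u) < (⨅ a, f u a) + ε := by
  classical
  set a := denseSeq 𝒜
  have hex : ∀ u, ∃ n, f u (a n) < (⨅ b, f u b) + ε := fun u => by
    refine exists_lt_of_ciInf_lt ?_
    rw [(denseRange_denseSeq 𝒜).ciInf_comp (hcont u) (hbdd u)]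
    exact lt_add_of_pos_right _ hε
  refine ⟨fun u => a (Nat.find (hex u)), ?_, fun u => Nat.find_spec (hex u)⟩
  exact Measurable.find (f := fun n _ => a n) (fun _ => measurable_const)
    (fun n => measurableSet_lt (hf _)
      ((measurable_iInf_of_continuous_s6 hf hcont hbdd).add_const ε)) hex

noncomputable def condRisk {Ω E 𝒜 : Type*} [MeasurableSpace Ω] [MeasurableSpace E]
    (P : Measure Ω) [IsFiniteMeasure P] (L : ℝ × 𝒜 → ℝ) (Y : Ω → ℝ) (W : Ω → E) (w : E)
    (a : 𝒜) : ℝ :=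
  ∫ y, L (y, a) ∂condDistrib Y W P w

section ConditionalEntropy

variable {Ω E 𝒜 : Type*} [MeasurableSpace Ω] [MeasurableSpace E]
  {P : Measure Ω} [IsProbabilityMeasure P] {L : ℝ × 𝒜 → ℝ} {Y : Ω → ℝ} {C : ℝ}

lemma abs_condRisk_le (hC : ∀ y a, |L (y, a)| ≤ C) (W : Ω → E) (w : E) (a : 𝒜) :
    |condRisk P L Y W w a| ≤ C :=
  abs_integral_le_of_forall_abs_le fun y => hC y a

variable [MeasurableSpace 𝒜]

instance [Nonempty 𝒜] : Nonempty {φ : E → 𝒜 // Measurable φ} :=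
  ⟨⟨fun _ => Classical.arbitrary 𝒜, measurable_const⟩⟩

lemma bddBelow_range_integral_loss (hC : ∀ y a, |L (y, a)| ≤ C) (W : Ω → E) :
    BddBelow (range fun φ : {φ : E → 𝒜 // Measurable φ} => ∫ ω, L (Y ω, φ.1 (W ω)) ∂P) :=
  ⟨-C, forall_mem_range.2 fun _ =>
    neg_le_of_abs_le (abs_integral_le_of_forall_abs_le fun _ => hC _ _)⟩

lemma HL_le_HL_comp_s6 [Nonempty 𝒜] {F : Type*} [MeasurableSpace F] (hC : ∀ y a, |L (y, a)| ≤ C)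
    (W : Ω → F) {g : F → E} (hg : Measurable g) : HL P L Y W ≤ HL P L Y (g ∘ W) :=
  le_ciInf fun φ => ciInf_le (bddBelow_range_integral_loss hC W) ⟨φ.1 ∘ g, φ.2.comp hg⟩

lemma measurable_condRisk (hL : Measurable L) (W : Ω → E) :
    Measurable (uncurry (condRisk P L Y W)) := by
  have hLsm : StronglyMeasurable (uncurry fun (p : E × 𝒜) (y : ℝ) => L (y, p.2)) :=
    (hL.comp (by fun_prop)).stronglyMeasurable
  have h := (hLsm.integral_kernel_prod_right
    (κ := (condDistrib Y W P).comap Prod.fst measurable_fst)).measurable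
  simp only [Kernel.comap_apply] at h
  exact h

lemma continuous_condRisk [TopologicalSpace 𝒜] [FirstCountableTopology 𝒜] (hL : Measurable L)
    (hC : ∀ y a, |L (y, a)| ≤ C) (hLcont : ∀ y, Continuous fun a => L (y, a)) (W : Ω → E)
    (w : E) : Continuous (condRisk P L Y W w) :=
  continuous_of_dominated (bound := fun _ => C)
    (fun _ => (hL.comp (measurable_id.prodMk measurable_const)).aestronglyMeasurable)
    (fun a => Eventually.of_forall fun y => hC y a) (integrable_const C)
    (Eventually.of_forall hLcont)

lemma integral_loss_eq_integral_condRisk (hY : Measurable Y) (hL : Measurable L)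
    (hC : ∀ y a, |L (y, a)| ≤ C) {W : Ω → E} (hW : Measurable W) {φ : E → 𝒜}
    (hφ : Measurable φ) :
    ∫ ω, L (Y ω, φ (W ω)) ∂P = ∫ ω, condRisk P L Y W (W ω) (φ (W ω)) ∂P := by
  have hf : Measurable fun p : E × ℝ => L (p.2, φ p.1) := hL.comp (by fun_prop)
  calc ∫ ω, L (Y ω, φ (W ω)) ∂P
      = ∫ ω, (P[fun ω => L (Y ω, φ (W ω)) | MeasurableSpace.comap W inferInstance]) ω ∂P :=
        (integral_condExp hW.comap_le).symm
    _ = ∫ ω, ∫ y, L (y, φ (W ω)) ∂condDistrib Y W P (W ω) ∂P :=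
        integral_congr_ae <| condExp_prod_ae_eq_integral_condDistrib hW hY.aemeasurable
          hf.stronglyMeasurable
          ((hf.comp (hW.prodMk hY)).integrable_of_forall_abs_le fun _ => hC _ _)

theorem HL_eq_integral_iInf_condRisk [TopologicalSpace 𝒜] [SecondCountableTopology 𝒜]
    [Nonempty 𝒜] (hY : Measurable Y) (hL : Measurable L) (hC : ∀ y a, |L (y, a)| ≤ C)
    (hLcont : ∀ y, Continuous fun a => L (y, a)) {W : Ω → E} (hW : Measurable W) :
    HL P L Y W = ∫ ω, ⨅ a, condRisk P L Y W (W ω) a ∂P := by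
  have hbdd (w : E) : BddBelow (range (condRisk P L Y W w)) :=
    ⟨-C, forall_mem_range.2 fun a => neg_le_of_abs_le (abs_condRisk_le hC W w a)⟩
  have hcont := continuous_condRisk (P := P) (Y := Y) hL hC hLcont W
  have hsec (a : 𝒜) : Measurable fun w => condRisk P L Y W w a :=
    (measurable_condRisk hL W).comp (measurable_id.prodMk measurable_const)
  have hrisk {φ : E → 𝒜} (hφ : Measurable φ) :
      Integrable (fun ω => condRisk P L Y W (W ω) (φ (W ω))) P :=
    ((measurable_condRisk hL W).comp (hW.prodMk (hφ.comp hW))).integrable_of_forall_abs_le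
      fun _ => abs_condRisk_le hC _ _ _
  have hbayes : Integrable (fun ω => ⨅ a, condRisk P L Y W (W ω) a) P :=
    ((measurable_iInf_of_continuous_s6 hsec hcont hbdd).comp hW).integrable_of_forall_abs_le
      fun _ => abs_ciInf_le_of_forall_abs_le fun _ => abs_condRisk_le hC W _ _
  refine le_antisymm (le_of_forall_pos_le_add fun ε hε => ?_) (le_ciInf fun φ => ?_)
  · obtain ⟨φ, hφ, hφε⟩ := exists_measurable_lt_iInf_add_s6 hsec hcont hbdd hε
    calc HL P L Y W ≤ ∫ ω, L (Y ω, φ (W ω)) ∂P :=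
          ciInf_le (bddBelow_range_integral_loss hC W) ⟨φ, hφ⟩
      _ = ∫ ω, condRisk P L Y W (W ω) (φ (W ω)) ∂P :=
          integral_loss_eq_integral_condRisk hY hL hC hW hφ
      _ ≤ ∫ ω, ((⨅ a, condRisk P L Y W (W ω) a) + ε) ∂P :=
          integral_mono (hrisk hφ) (hbayes.add (integrable_const ε)) fun _ => (hφε _).le
      _ = (∫ ω, ⨅ a, condRisk P L Y W (W ω) a ∂P) + ε := by
          rw [integral_add hbayes (integrable_const ε)]
          simp
  · rw [integral_loss_eq_integral_condRisk hY hL hC hW φ.2]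
    exact integral_mono hbayes (hrisk φ.2) fun _ => ciInf_le (hbdd _) _

end ConditionalEntropy

section Markov

variable {Ω E F : Type*} [MeasurableSpace Ω] [StandardBorelSpace Ω] [MeasurableSpace E]
  [MeasurableSpace F] [StandardBorelSpace F] [Nonempty F] {P : Measure Ω} [IsProbabilityMeasure P]
  {Y : Ω → ℝ} {U : Ω → E} {V : Ω → F}

lemma condDistrib_prod_ae_eq_of_condIndep (hY : Measurable Y) (hU : Measurable U)
    (hV : Measurable V)
    (h : CondIndep (MeasurableSpace.comap U inferInstance) (MeasurableSpace.comap Y inferInstance)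
      (MeasurableSpace.comap V inferInstance) hU.comap_le P) :
    ∀ᵐ ω ∂P, condDistrib Y (fun ω => (U ω, V ω)) P (U ω, V ω) = condDistrib Y U P (U ω) := by
  have hVY : V ⟂ᵢ[U, hU; P] Y := ((condIndepFun_iff_condIndep ..).2 h).symm
  exact ae_of_ae_map (hU.prodMk hV).aemeasurable
    ((condIndepFun_iff_condDistrib_prod_ae_eq_prodMkRight hY hV hU).1 hVY)

theorem HL_prod_eq_of_condIndep {𝒜 : Type*} [TopologicalSpace 𝒜] [SecondCountableTopology 𝒜]
    [Nonempty 𝒜] [MeasurableSpace 𝒜] {L : ℝ × 𝒜 → ℝ} {C : ℝ} (hY : Measurable Y)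
    (hL : Measurable L) (hC : ∀ y a, |L (y, a)| ≤ C) (hLcont : ∀ y, Continuous fun a => L (y, a))
    (hU : Measurable U) (hV : Measurable V)
    (h : CondIndep (MeasurableSpace.comap U inferInstance) (MeasurableSpace.comap Y inferInstance)
      (MeasurableSpace.comap V inferInstance) hU.comap_le P) :
    HL P L Y (fun ω => (U ω, V ω)) = HL P L Y U := by
  rw [HL_eq_integral_iInf_condRisk hY hL hC hLcont hU,
    HL_eq_integral_iInf_condRisk hY hL hC hLcont (hU.prodMk hV)]
  refine integral_congr_ae ?_
  filter_upwards [condDistrib_prod_ae_eq_of_condIndep hY hU hV h] with ω hω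
  simp only [condRisk, hω]

end Markov

theorem HL_aging_exact_markov_general
    {Ω 𝒜 : Type*} [MeasurableSpace Ω] [StandardBorelSpace Ω]
    [MetricSpace 𝒜] [CompactSpace 𝒜] [Nonempty 𝒜] [MeasurableSpace 𝒜]
    (P : Measure Ω) [IsProbabilityMeasure P]
    (Y : Ω → ℝ) (hY : Measurable Y)
    (l : ℕ) (t : ℤ)
    (Xv : ℤ → Ω → Fin l → ℝ)
    (hXvm : ∀ s, Measurable (Xv s))
    (L : ℝ × 𝒜 → ℝ) (hLmeas : Measurable L)
    (hLbdd : ∃ C : ℝ, ∀ y a, |L (y, a)| ≤ C)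
    (hLcont : ∀ y : ℝ, Continuous fun a => L (y, a))
    (hMarkov : ∀ μ ν : ℕ, CondIndep (MeasurableSpace.comap (Xv (t - μ)) inferInstance)
      (MeasurableSpace.comap Y inferInstance)
      (MeasurableSpace.comap (Xv (t - μ - ν)) inferInstance)
      (hXvm (t - μ)).comap_le P) :
    (∀ δ : ℕ, HL P L Y (Xv (t - δ))
        = HL P L Y (Xv t) + ∑ k ∈ Finset.range δ,
            (HL P L Y (Xv (t - k - 1))
              - HL P L Y (fun ω => (Xv (t - k) ω, Xv (t - k - 1) ω))))
      ∧ (∀ k : ℕ, 0 ≤ HL P L Y (Xv (t - k - 1))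
          - HL P L Y (fun ω => (Xv (t - k) ω, Xv (t - k - 1) ω)))
      ∧ (∀ δ₁ δ₂ : ℕ, δ₁ ≤ δ₂ → HL P L Y (Xv (t - δ₁)) ≤ HL P L Y (Xv (t - δ₂))) := by
  obtain ⟨C, hC⟩ := hLbdd
  set H : ℕ → ℝ := fun j => HL P L Y (Xv (t - j))
  have hpair (k : ℕ) : HL P L Y (fun ω => (Xv (t - k) ω, Xv (t - k - 1) ω)) = H k := by
    have hk := hMarkov k 1
    rw [Nat.cast_one] at hk
    exact HL_prod_eq_of_condIndep hY hLmeas hC hLcont (hXvm _) (hXvm _) hk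
  have hgain (k : ℕ) : HL P L Y (Xv (t - k - 1))
      - HL P L Y (fun ω => (Xv (t - k) ω, Xv (t - k - 1) ω)) = H (k + 1) - H k := by
    simp only [hpair, H, Nat.cast_succ, sub_add_eq_sub_sub]
  have hgain_nonneg (k : ℕ) : 0 ≤ HL P L Y (Xv (t - k - 1))
      - HL P L Y (fun ω => (Xv (t - k) ω, Xv (t - k - 1) ω)) :=
    sub_nonneg.2 (HL_le_HL_comp_s6 hC _ measurable_snd)
  refine ⟨fun δ => ?_, hgain_nonneg, fun _ _ h => monotone_nat_of_le_succ (f := H) (fun k => ?_) h⟩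
  · rw [Finset.sum_congr rfl fun k _ => hgain k, Finset.sum_range_sub]
    simp [H]
  · linarith [hgain_nonneg k, hgain k]

/-- Exact-Markov case of the information-aging lemma: let `(X_s)_{s ∈ ℤ}`
be real random variables, `Y` a real random variable, `l ≥ 1`, and
`X^l_s = (X_s, …, X_{s−l+1})`.  If for every `μ, ν ≥ 0` the σ-algebras `σ(Y)` and
`σ(X^l_{t−μ−ν})` are conditionally independent given `σ(X^l_{t−μ})`, then for every `δ ≥ 0`,
`H_L(Y | X^l_{t−δ}) = H_L(Y | X^l_t) + Σ_{k=0}^{δ−1} I_L(Y; X^l_{t−k} | X^l_{t−k−1})`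
where `I_L(Y; U | V) = H_L(Y | V) − H_L(Y | (U,V)) ≥ 0`; in particular
`δ ↦ H_L(Y | X^l_{t−δ})` is non-decreasing on `ℕ`. -/
theorem HL_aging_exact_markov
    {Ω 𝒜 : Type*} [MeasurableSpace Ω] [StandardBorelSpace Ω]
    [MetricSpace 𝒜] [CompactSpace 𝒜] [Nonempty 𝒜] [MeasurableSpace 𝒜] [BorelSpace 𝒜]
    (P : Measure Ω) [IsProbabilityMeasure P]
    (X : ℤ → Ω → ℝ) (Y : Ω → ℝ) (hX : ∀ s, Measurable (X s)) (hY : Measurable Y)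
    (l : ℕ) (hl : 1 ≤ l) (t : ℤ)
    (Xv : ℤ → Ω → Fin l → ℝ) (hXv : ∀ s ω i, Xv s ω i = X (s - (i : ℤ)) ω)
    (hXvm : ∀ s, Measurable (Xv s))
    (L : ℝ × 𝒜 → ℝ) (hLmeas : Measurable L)
    (hLbdd : ∃ C : ℝ, ∀ y a, |L (y, a)| ≤ C)
    (hLcont : ∀ y : ℝ, Continuous fun a => L (y, a))
    (hMarkov : ∀ μ ν : ℕ, CondIndep (MeasurableSpace.comap (Xv (t - μ)) inferInstance)
      (MeasurableSpace.comap Y inferInstance)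
      (MeasurableSpace.comap (Xv (t - μ - ν)) inferInstance)
      (hXvm (t - μ)).comap_le P) :
    (∀ δ : ℕ, HL P L Y (Xv (t - δ))
        = HL P L Y (Xv t) + ∑ k ∈ Finset.range δ,
            (HL P L Y (Xv (t - k - 1))
              - HL P L Y (fun ω => (Xv (t - k) ω, Xv (t - k - 1) ω))))
      ∧ (∀ k : ℕ, 0 ≤ HL P L Y (Xv (t - k - 1))
          - HL P L Y (fun ω => (Xv (t - k) ω, Xv (t - k - 1) ω)))
      ∧ (∀ δ₁ δ₂ : ℕ, δ₁ ≤ δ₂ → HL P L Y (Xv (t - δ₁)) ≤ HL P L Y (Xv (t - δ₂))) :=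
  HL_aging_exact_markov_general P Y hY l t Xv hXvm L hLmeas hLbdd hLcont hMarkov
end

section
/- Closed-form Gaussian conditional mutual information: let R be a positive-definite (a+b+c)×(a+b+c) real covariance matrix for a centered Gaussian vector (Y, Z, X) with Y ∈ ℝ^a, Z ∈ ℝ^b, X ∈ ℝ^c, and let μ be the centered Gaussian measure on ℝ^{a+b+c} with covariance R. Denote by R_X, R_{[Y,X]}, R_{[Z,X]} the submatrices of R corresponding to the coordinate blocks X, (Y,X), and (Z,X) respectively. Then ∫ log( ( p_R(y,z,x) · p_{R_X}(x) ) / ( p_{R_{[Y,X]}}(y,x) · p_{R_{[Z,X]}}(z,x) ) ) dμ(y,z,x) = (1/2)·log( ( det R_{[Z,X]} · det R_{[Y,X]} ) / ( det R_X · det R ) ). In particular, the Shannon conditional mutual information I(Y; Z | X) of a centered Gaussian vector equals (1/2) log( det R_{[Z,X]} det R_{[Y,X]} / ( det R_X det R_{[Y,Z,X]} ) ). -/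
open MeasureTheory Matrix

/-- The centered Gaussian density on `ℝ^ι` with covariance matrix `Σ`:
`p_Σ(u) = ((2π)^k det Σ)^(−1/2) · exp(−(1/2) uᵀ Σ⁻¹ u)`. -/
noncomputable def gaussDensity {ι : Type*} [Fintype ι] [DecidableEq ι]
    (S : Matrix ι ι ℝ) (u : ι → ℝ) : ℝ :=
  (Real.sqrt ((2 * Real.pi) ^ Fintype.card ι * S.det))⁻¹ *
    Real.exp (-(1 / 2) * (u ⬝ᵥ S⁻¹.mulVec u))

/-- The centered Gaussian measure on `ℝ^ι` with covariance matrix `Σ`: the measure with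
density `p_Σ` with respect to Lebesgue measure. -/
noncomputable def gaussMeasure {ι : Type*} [Fintype ι] [DecidableEq ι]
    (S : Matrix ι ι ℝ) : Measure (ι → ℝ) :=
  volume.withDensity fun u => ENNReal.ofReal (gaussDensity S u)

/-!
The logarithm of a centered Gaussian density `p_S` is the constant `-(k log 2π + log det S)/2`
minus half the quadratic form `uᵀ S⁻¹ u`. Under `μ_R` the coordinates of `v` have second moments
`𝔼 vᵢ vⱼ = Rᵢⱼ`, so for a block `e` of coordinates the quadratic form of `R_e⁻¹` integrates to
`tr (R_e⁻¹ R_e) = |e|`, and `∫ log p_{R_e}(v_e) dμ_R = -(|e| (log 2π + 1) + log det R_e)/2`.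
In the alternating sum of the four blocks the dimension terms cancel,
`(a+b+c) + c - (a+c) - (b+c) = 0`, and only the log-determinants remain.

The second moments come from writing `R = A Aᵀ`: by a linear change of variables `μ_R` is the
push-forward of the standard Gaussian `∏ N(0,1)` along `w ↦ A w`.
-/

open Real ProbabilityTheory

section StandardGaussian

variable {ι : Type*} [Fintype ι]

lemma memLp_eval_pi_gaussianReal {p : ENNReal} (hp : p ≠ ⊤) (k : ι) :
    MemLp (fun w : ι → ℝ => w k) p (Measure.pi fun _ => gaussianReal 0 1) :=
  (memLp_id_gaussianReal' p hp).comp_measurePreserving (measurePreserving_eval _ k)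

lemma integrable_eval_mul_eval_pi_gaussianReal (k l : ι) :
    Integrable (fun w : ι → ℝ => w k * w l) (Measure.pi fun _ => gaussianReal 0 1) :=
  (memLp_eval_pi_gaussianReal (p := 2) ENNReal.ofNat_ne_top k).integrable_mul
    (memLp_eval_pi_gaussianReal (p := 2) ENNReal.ofNat_ne_top l)

lemma integral_eval_mul_eval_pi_gaussianReal [DecidableEq ι] (k l : ι) :
    ∫ w : ι → ℝ, w k * w l ∂(Measure.pi fun _ => gaussianReal 0 1) = (1 : Matrix ι ι ℝ) k l := by
  rcases eq_or_ne k l with rfl | hkl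
  · rw [one_apply_eq, integral_comp_eval (f := fun x => x * x) (by fun_prop)]
    have hvar := variance_of_integral_eq_zero aemeasurable_id
      (integral_id_gaussianReal (μ := 0) (v := 1))
    simpa [sq] using hvar.symm
  · rw [one_apply_ne hkl, IndepFun.integral_fun_mul_eq_mul_integral
      ((iIndepFun_pi fun _ => aemeasurable_id).indepFun hkl)
      (measurable_pi_apply k).aestronglyMeasurable (measurable_pi_apply l).aestronglyMeasurable,
      integral_eval, integral_id_gaussianReal, zero_mul]

end StandardGaussian

lemma integral_log_mul_div_mul {α : Type*} [MeasurableSpace α] {μ : Measure α}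
    {f₁ f₂ g₁ g₂ : α → ℝ} (hf₁ : ∀ x, f₁ x ≠ 0) (hf₂ : ∀ x, f₂ x ≠ 0) (hg₁ : ∀ x, g₁ x ≠ 0)
    (hg₂ : ∀ x, g₂ x ≠ 0) (if₁ : Integrable (fun x => Real.log (f₁ x)) μ)
    (if₂ : Integrable (fun x => Real.log (f₂ x)) μ) (ig₁ : Integrable (fun x => Real.log (g₁ x)) μ)
    (ig₂ : Integrable (fun x => Real.log (g₂ x)) μ) :
    ∫ x, Real.log (f₁ x * f₂ x / (g₁ x * g₂ x)) ∂μ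
      = ∫ x, Real.log (f₁ x) ∂μ + ∫ x, Real.log (f₂ x) ∂μ - ∫ x, Real.log (g₁ x) ∂μ
        - ∫ x, Real.log (g₂ x) ∂μ := by
  have hsplit (x : α) : Real.log (f₁ x * f₂ x / (g₁ x * g₂ x))
      = Real.log (f₁ x) + Real.log (f₂ x) - Real.log (g₁ x) - Real.log (g₂ x) := by
    rw [Real.log_div (mul_ne_zero (hf₁ x) (hf₂ x)) (mul_ne_zero (hg₁ x) (hg₂ x)),
      Real.log_mul (hf₁ x) (hf₂ x), Real.log_mul (hg₁ x) (hg₂ x)]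
    ring
  simp_rw [hsplit]
  rw [integral_sub ?_ ig₂, integral_sub ?_ ig₁, integral_add if₁ if₂]
  exacts [if₁.add if₂, (if₁.add if₂).sub ig₁]

lemma Matrix.dotProduct_mulVec_eq_sum {κ : Type*} [Fintype κ] (M : Matrix κ κ ℝ) (u : κ → ℝ) :
    u ⬝ᵥ M *ᵥ u = ∑ p, ∑ r, M p r * (u r * u p) := by
  simp only [dotProduct, mulVec, Finset.mul_sum]
  exact Finset.sum_congr rfl fun p _ => Finset.sum_congr rfl fun r _ => by ring

section GaussMeasure

variable {ι κ : Type*} [Fintype ι] [DecidableEq ι] [Fintype κ]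

lemma gaussDensity_pos {S : Matrix ι ι ℝ} (hS : S.PosDef) (u : ι → ℝ) :
    0 < gaussDensity S u := by
  have := hS.det_pos
  unfold gaussDensity
  positivity

lemma log_gaussDensity {S : Matrix ι ι ℝ} (hS : S.PosDef) (u : ι → ℝ) :
    Real.log (gaussDensity S u)
      = -(Fintype.card ι * Real.log (2 * π) + Real.log S.det) / 2 - u ⬝ᵥ S⁻¹ *ᵥ u / 2 := by
  have hpos : 0 < (2 * π) ^ Fintype.card ι * S.det := by have := hS.det_pos; positivity
  rw [gaussDensity, Real.log_mul (by positivity) (Real.exp_pos _).ne', Real.log_inv,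
    Real.log_sqrt hpos.le, Real.log_exp, Real.log_mul (by positivity) hS.det_pos.ne',
    Real.log_pow]
  ring

lemma gaussDensity_one_eq_prod (w : ι → ℝ) :
    gaussDensity (1 : Matrix ι ι ℝ) w = ∏ i, gaussianPDFReal 0 1 (w i) := by
  simp only [gaussDensity, gaussianPDFReal, det_one, mul_one, inv_one, one_mulVec, sub_zero,
    NNReal.coe_one]
  rw [Finset.prod_mul_distrib, ← Real.exp_sum, Finset.prod_inv_distrib,
    ← Real.sqrt_prod _ fun _ _ => by positivity, Finset.prod_const, Finset.card_univ]
  congr 2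
  simp only [dotProduct, Finset.mul_sum]
  exact Finset.sum_congr rfl fun i _ => by ring

lemma gaussMeasure_one :
    gaussMeasure (1 : Matrix ι ι ℝ) = Measure.pi fun _ => gaussianReal 0 1 := by
  have hint : Integrable (gaussDensity (1 : Matrix ι ι ℝ)) := by
    simp_rw [funext gaussDensity_one_eq_prod]
    exact Integrable.fintype_prod fun _ => integrable_gaussianPDFReal 0 1
  have hnonneg : 0 ≤ gaussDensity (1 : Matrix ι ι ℝ) := fun w => by
    rw [gaussDensity_one_eq_prod]
    exact Finset.prod_nonneg fun i _ => gaussianPDFReal_nonneg 0 1 _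
  refine (Measure.pi_eq fun s hs => ?_).symm
  rw [gaussMeasure, withDensity_apply _ (MeasurableSet.univ_pi hs),
    ← ofReal_integral_eq_lintegral_ofReal hint.integrableOn (ae_of_all _ hnonneg), volume_pi,
    Measure.restrict_pi_pi]
  simp_rw [gaussDensity_one_eq_prod]
  rw [integral_fintype_prod_eq_prod, ENNReal.ofReal_prod_of_nonneg fun i _ =>
    setIntegral_nonneg (hs i) fun x _ => gaussianPDFReal_nonneg 0 1 x]
  exact Finset.prod_congr rfl fun i _ => (gaussianReal_apply_eq_integral 0 one_ne_zero _).symm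

lemma abs_det_mul_gaussDensity_mul_transpose {A : Matrix ι ι ℝ} (hA : A.det ≠ 0) (w : ι → ℝ) :
    |A.det| * gaussDensity (A * Aᵀ) (A *ᵥ w) = gaussDensity 1 w := by
  have hquad : A *ᵥ w ⬝ᵥ (A * Aᵀ)⁻¹ *ᵥ (A *ᵥ w) = w ⬝ᵥ w := by
    rw [Matrix.mul_inv_rev, mulVec_mulVec, Matrix.mul_assoc, nonsing_inv_mul _ hA.isUnit,
      Matrix.mul_one, ← transpose_nonsing_inv, dotProduct_mulVec, vecMul_transpose,
      mulVec_mulVec, nonsing_inv_mul _ hA.isUnit, one_mulVec]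
  have hdet : (A * Aᵀ).det = |A.det| ^ 2 := by
    rw [det_mul, det_transpose, sq_abs, sq]
  simp only [gaussDensity, hquad, hdet, det_one, mul_one, inv_one, one_mulVec]
  rw [Real.sqrt_mul (by positivity), Real.sqrt_sq (abs_nonneg _)]
  field_simp

lemma gaussMeasure_mul_transpose {A : Matrix ι ι ℝ} (hA : A.det ≠ 0) :
    gaussMeasure (A * Aᵀ) = (Measure.pi fun _ : ι => gaussianReal 0 1).map (A *ᵥ ·) := by
  have hT : Measurable (A *ᵥ ·) := by fun_prop
  have hvol : volume.map (A *ᵥ ·) = ENNReal.ofReal |A.det⁻¹| • (volume : Measure (ι → ℝ)) := by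
    have := Measure.map_linearMap_addHaar_eq_smul_addHaar volume (f := toLin' A)
      (by rwa [LinearMap.det_toLin'])
    rwa [LinearMap.det_toLin'] at this
  have hρ : Measurable (gaussDensity (A * Aᵀ)) := by unfold gaussDensity; fun_prop
  rw [← gaussMeasure_one]
  ext s hs
  rw [Measure.map_apply hT hs, gaussMeasure, gaussMeasure, withDensity_apply _ (hT hs),
    withDensity_apply _ hs]
  calc ∫⁻ v in s, ENNReal.ofReal (gaussDensity (A * Aᵀ) v)
      = ENNReal.ofReal |A.det| *
          ∫⁻ v in s, ENNReal.ofReal (gaussDensity (A * Aᵀ) v) ∂volume.map (A *ᵥ ·) := by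
        rw [hvol, Measure.restrict_smul, lintegral_smul_measure, smul_eq_mul, ← mul_assoc,
          ← ENNReal.ofReal_mul (abs_nonneg _), ← abs_mul, mul_inv_cancel₀ hA, abs_one,
          ENNReal.ofReal_one, one_mul]
    _ = ∫⁻ w in (A *ᵥ ·) ⁻¹' s,
          ENNReal.ofReal |A.det| * ENNReal.ofReal (gaussDensity (A * Aᵀ) (A *ᵥ w)) := by
        rw [lintegral_const_mul' _ _ ENNReal.ofReal_ne_top,
          setLIntegral_map hs hρ.ennreal_ofReal hT]
    _ = ∫⁻ w in (A *ᵥ ·) ⁻¹' s, ENNReal.ofReal (gaussDensity 1 w) := by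
        simp_rw [← abs_det_mul_gaussDensity_mul_transpose hA, ENNReal.ofReal_mul (abs_nonneg _)]

open scoped MatrixOrder in
lemma Matrix.PosDef.exists_mul_transpose_eq {R : Matrix ι ι ℝ} (hR : R.PosDef) :
    ∃ A : Matrix ι ι ℝ, A.det ≠ 0 ∧ A * Aᵀ = R := by
  have hAA : CFC.sqrt R * (CFC.sqrt R)ᵀ = R := by
    rw [← conjTranspose_eq_transpose_of_trivial, ← star_eq_conjTranspose,
      (CFC.sqrt_nonneg R).isSelfAdjoint.star_eq, CFC.sqrt_mul_sqrt_self R hR.posSemidef.nonneg]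
  refine ⟨CFC.sqrt R, fun h => hR.det_pos.ne' ?_, hAA⟩
  rw [← hAA, det_mul, h, zero_mul]

variable {R : Matrix ι ι ℝ}

lemma isProbabilityMeasure_gaussMeasure (hR : R.PosDef) :
    IsProbabilityMeasure (gaussMeasure R) := by
  obtain ⟨A, hA, rfl⟩ := hR.exists_mul_transpose_eq
  rw [gaussMeasure_mul_transpose hA]
  exact Measure.isProbabilityMeasure_map (by fun_prop)

lemma integrable_eval_mul_eval_gaussMeasure (hR : R.PosDef) (i j : ι) :
    Integrable (fun v => v i * v j) (gaussMeasure R) := by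
  obtain ⟨A, hA, rfl⟩ := hR.exists_mul_transpose_eq
  rw [gaussMeasure_mul_transpose hA, integrable_map_measure (by fun_prop) (by fun_prop)]
  have hL2 (i : ι) : MemLp (fun w => (A *ᵥ w) i) 2 (Measure.pi fun _ => gaussianReal 0 1) :=
    memLp_finsetSum _ fun k _ =>
      (memLp_eval_pi_gaussianReal ENNReal.ofNat_ne_top k).const_mul (A i k)
  exact (hL2 i).integrable_mul (hL2 j)

lemma integral_eval_mul_eval_gaussMeasure (hR : R.PosDef) (i j : ι) :
    ∫ v, v i * v j ∂gaussMeasure R = R i j := by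
  obtain ⟨A, hA, rfl⟩ := hR.exists_mul_transpose_eq
  rw [gaussMeasure_mul_transpose hA, integral_map (by fun_prop) (by fun_prop)]
  calc ∫ w, (A *ᵥ w) i * (A *ᵥ w) j ∂(Measure.pi fun _ => gaussianReal 0 1)
      = ∫ w, ∑ k, ∑ l, A i k * A j l * (w k * w l) ∂(Measure.pi fun _ => gaussianReal 0 1) := by
        simp only [mulVec, dotProduct, Finset.sum_mul_sum]
        exact integral_congr_ae (ae_of_all _ fun w => Finset.sum_congr rfl fun k _ =>
          Finset.sum_congr rfl fun l _ => by ring)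
    _ = ∑ k, ∑ l, A i k * A j l * (1 : Matrix ι ι ℝ) k l := by
        rw [integral_finsetSum _ fun k _ => integrable_finsetSum _ fun l _ =>
          (integrable_eval_mul_eval_pi_gaussianReal k l).const_mul _]
        refine Finset.sum_congr rfl fun k _ => ?_
        rw [integral_finsetSum _ fun l _ =>
          (integrable_eval_mul_eval_pi_gaussianReal k l).const_mul _]
        simp only [integral_const_mul, integral_eval_mul_eval_pi_gaussianReal]
    _ = (A * Aᵀ) i j := by simp [mul_apply, one_apply]

lemma integrable_dotProduct_mulVec_comp_gaussMeasure (hR : R.PosDef) (e : κ → ι)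
    (M : Matrix κ κ ℝ) :
    Integrable (fun v => (fun p => v (e p)) ⬝ᵥ M *ᵥ (fun p => v (e p))) (gaussMeasure R) := by
  simp_rw [dotProduct_mulVec_eq_sum]
  exact integrable_finsetSum _ fun p _ => integrable_finsetSum _ fun r _ =>
    (integrable_eval_mul_eval_gaussMeasure hR (e r) (e p)).const_mul _

lemma integral_dotProduct_mulVec_comp_gaussMeasure (hR : R.PosDef) (e : κ → ι)
    (M : Matrix κ κ ℝ) :
    ∫ v, (fun p => v (e p)) ⬝ᵥ M *ᵥ (fun p => v (e p)) ∂gaussMeasure R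
      = (M * R.submatrix e e).trace := by
  simp_rw [dotProduct_mulVec_eq_sum]
  refine (integral_finsetSum _ fun p _ => integrable_finsetSum _ fun r _ =>
      (integrable_eval_mul_eval_gaussMeasure hR (e r) (e p)).const_mul _).trans
    (Finset.sum_congr rfl fun p _ => ?_)
  refine (integral_finsetSum _ fun r _ =>
    (integrable_eval_mul_eval_gaussMeasure hR (e r) (e p)).const_mul _).trans ?_
  simp only [integral_const_mul, integral_eval_mul_eval_gaussMeasure hR, diag_apply, mul_apply,
    submatrix_apply]

lemma integrable_log_gaussDensity_comp_gaussMeasure [DecidableEq κ] (hR : R.PosDef) {e : κ → ι}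
    (he : Function.Injective e) :
    Integrable (fun v => Real.log (gaussDensity (R.submatrix e e) fun p => v (e p)))
      (gaussMeasure R) := by
  have := isProbabilityMeasure_gaussMeasure hR
  simp_rw [log_gaussDensity (hR.submatrix he)]
  exact (integrable_const _).sub
    ((integrable_dotProduct_mulVec_comp_gaussMeasure hR e _).div_const 2)

lemma integral_log_gaussDensity_comp_gaussMeasure [DecidableEq κ] (hR : R.PosDef) {e : κ → ι}
    (he : Function.Injective e) :
    ∫ v, Real.log (gaussDensity (R.submatrix e e) fun p => v (e p)) ∂gaussMeasure R
      = -(Fintype.card κ * (Real.log (2 * π) + 1) + Real.log (R.submatrix e e).det) / 2 := by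
  have := isProbabilityMeasure_gaussMeasure hR
  have hS := hR.submatrix he
  simp_rw [log_gaussDensity hS]
  rw [integral_sub (integrable_const _)
      ((integrable_dotProduct_mulVec_comp_gaussMeasure hR e _).div_const 2),
    integral_const, integral_div, integral_dotProduct_mulVec_comp_gaussMeasure hR,
    nonsing_inv_mul _ hS.det_pos.ne'.isUnit, trace_one, probReal_univ, one_smul]
  ring

lemma integrable_log_gaussDensity_gaussMeasure (hR : R.PosDef) :
    Integrable (fun v => Real.log (gaussDensity R v)) (gaussMeasure R) := by
  simpa using integrable_log_gaussDensity_comp_gaussMeasure hR Function.injective_id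

lemma integral_log_gaussDensity_gaussMeasure (hR : R.PosDef) :
    ∫ v, Real.log (gaussDensity R v) ∂gaussMeasure R
      = -(Fintype.card ι * (Real.log (2 * π) + 1) + Real.log R.det) / 2 := by
  simpa using integral_log_gaussDensity_comp_gaussMeasure hR Function.injective_id

end GaussMeasure

/-- Closed-form Gaussian conditional mutual information: for a centered
Gaussian vector `(Y, Z, X)` on `ℝ^(a+b+c)` (coordinates indexed by `Fin a ⊕ Fin b ⊕ Fin c`,
the `Y`-block first, then the `Z`-block, then the `X`-block) with positive-definite
covariance `R`, the Shannon conditional mutual information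
`I(Y; Z | X) = ∫ log( p_R(y,z,x) · p_{R_X}(x) / ( p_{R_[Y,X]}(y,x) · p_{R_[Z,X]}(z,x) ) ) dμ_R`
equals `(1/2)·log( det R_[Z,X] · det R_[Y,X] / ( det R_X · det R ) )`. -/
theorem gaussian_conditional_mutual_information (a b c : ℕ)
    (R : Matrix (Fin a ⊕ Fin b ⊕ Fin c) (Fin a ⊕ Fin b ⊕ Fin c) ℝ) (hR : R.PosDef) :
    (∫ v, Real.log
        ((gaussDensity R v *
            gaussDensity (R.submatrix (Sum.inr ∘ Sum.inr) (Sum.inr ∘ Sum.inr))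
              (fun i : Fin c => v (Sum.inr (Sum.inr i)))) /
          (gaussDensity
              (R.submatrix (Sum.elim Sum.inl (Sum.inr ∘ Sum.inr))
                (Sum.elim Sum.inl (Sum.inr ∘ Sum.inr)))
              (fun i : Fin a ⊕ Fin c => v (Sum.elim Sum.inl (Sum.inr ∘ Sum.inr) i)) *
            gaussDensity
              (R.submatrix (Sum.elim (Sum.inr ∘ Sum.inl) (Sum.inr ∘ Sum.inr))
                (Sum.elim (Sum.inr ∘ Sum.inl) (Sum.inr ∘ Sum.inr)))
              (fun i : Fin b ⊕ Fin c => v (Sum.elim (Sum.inr ∘ Sum.inl) (Sum.inr ∘ Sum.inr) i))))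
      ∂(gaussMeasure R))
      = 1 / 2 * Real.log
          (((R.submatrix (Sum.elim (Sum.inr ∘ Sum.inl) (Sum.inr ∘ Sum.inr))
                (Sum.elim (Sum.inr ∘ Sum.inl) (Sum.inr ∘ Sum.inr))).det *
              (R.submatrix (Sum.elim Sum.inl (Sum.inr ∘ Sum.inr))
                (Sum.elim Sum.inl (Sum.inr ∘ Sum.inr))).det) /
            ((R.submatrix (Sum.inr ∘ Sum.inr) (Sum.inr ∘ Sum.inr)).det * R.det)) := by
  have hX : Function.Injective (Sum.inr ∘ Sum.inr : Fin c → Fin a ⊕ Fin b ⊕ Fin c) :=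
    Sum.inr_injective.comp Sum.inr_injective
  have hYX : Function.Injective (Sum.elim Sum.inl (Sum.inr ∘ Sum.inr) : Fin a ⊕ Fin c → _) :=
    Sum.inl_injective.sumElim hX fun _ _ => Sum.inl_ne_inr
  have hZX : Function.Injective (Sum.elim (Sum.inr ∘ Sum.inl) (Sum.inr ∘ Sum.inr) :
      Fin b ⊕ Fin c → _) :=
    (Sum.inr_injective.comp Sum.inl_injective).sumElim hX fun _ _ =>
      Sum.inr_injective.ne Sum.inl_ne_inr
  refine (integral_log_mul_div_mul (fun _ => (gaussDensity_pos hR _).ne')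
      (fun _ => (gaussDensity_pos (hR.submatrix hX) _).ne')
      (fun _ => (gaussDensity_pos (hR.submatrix hYX) _).ne')
      (fun _ => (gaussDensity_pos (hR.submatrix hZX) _).ne')
      (integrable_log_gaussDensity_gaussMeasure hR)
      (integrable_log_gaussDensity_comp_gaussMeasure hR hX)
      (integrable_log_gaussDensity_comp_gaussMeasure hR hYX)
      (integrable_log_gaussDensity_comp_gaussMeasure hR hZX)).trans ?_
  rw [integral_log_gaussDensity_gaussMeasure hR, integral_log_gaussDensity_comp_gaussMeasure hR hX,
    integral_log_gaussDensity_comp_gaussMeasure hR hYX,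
    integral_log_gaussDensity_comp_gaussMeasure hR hZX,
    Real.log_div (mul_pos (hR.submatrix hZX).det_pos (hR.submatrix hYX).det_pos).ne'
      (mul_pos (hR.submatrix hX).det_pos hR.det_pos).ne',
    Real.log_mul (hR.submatrix hZX).det_pos.ne' (hR.submatrix hYX).det_pos.ne',
    Real.log_mul (hR.submatrix hX).det_pos.ne' hR.det_pos.ne']
  simp only [Fintype.card_sum, Fintype.card_fin, Nat.cast_add]
  ring
end

section
/- KL-divergence characterization of the ε-Markov chain parameter: let Y : Ω → ℝ, X : Ω → E₁, Z : Ω → E₂ be random elements of standard Borel spaces on a probability space (Ω, F, P). Let ν be the measure on ℝ × E₁ × E₂ obtained by first drawing x according to the law of X and then, independently given x, drawing y from condDistrib Y X P (x) and z from condDistrib Z X P (x) (i.e., ν = P_{Y|X} P_{Z|X} P_X). Then the Kullback–Leibler divergence satisfies KL( law(Y, X, Z) ‖ ν ) = ∫ KL( condDistrib Y (X,Z) P (x, z) ‖ condDistrib Y X P (x) ) d(law(X, Z))(x, z). -/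
open MeasureTheory ProbabilityTheory
open scoped ENNReal

open Classical in
/-- The Kullback–Leibler divergence `KL(μ ‖ ν)` (this Mathlib version has no
`ProbabilityTheory.klDiv`, so we define it here): it is the integral
`∫ log(dμ/dν) dμ` of the log-likelihood ratio when `μ ≪ ν` and the log-likelihood ratio
is `μ`-integrable, and `∞` otherwise.  Since all measures appearing below are probability
measures, their KL divergences are nonnegative and we may take values in `ℝ≥0∞`. -/
noncomputable def klDiv {α : Type*} [MeasurableSpace α] (μ ν : Measure α) : ℝ≥0∞ :=
  if μ ≪ ν ∧ Integrable (llr μ ν) μ then ENNReal.ofReal (∫ x, llr μ ν x ∂μ) else ⊤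

/-!
Disintegrating along `(X, Z)`, the law of `(Y, X, Z)` is `law(X, Z) ⊗ P_{Y|X,Z}`, and `ν` is
`law(X, Z) ⊗ P_{Y|X}` because under `ν` the coordinate `z` is drawn from `P_{Z|X}` independently
of `y`. For two composition products with the same marginal, the Radon-Nikodym derivative is
the kernel derivative `∂P_{Y|X,Z}/∂P_{Y|X}` evaluated fibrewise, so Tonelli's theorem splits the
divergence into the average of the fibrewise divergences.
-/

open Set

/-- `klDiv` omits the mass correction `ν.real univ - μ.real univ` of
`InformationTheory.klDiv`, which vanishes for measures of equal mass. -/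
lemma klDiv_eq_informationTheory_klDiv {α : Type*} [MeasurableSpace α] {μ ν : Measure α}
    (h : μ univ = ν univ) : klDiv μ ν = InformationTheory.klDiv μ ν := by
  classical
  rw [klDiv, InformationTheory.klDiv_def, measureReal_def, measureReal_def, h, add_sub_cancel_right]

namespace ProbabilityTheory

variable {α β γ : Type*} [MeasurableSpace α] [MeasurableSpace β] [MeasurableSpace γ]

lemma rnDeriv_measure_compProd_right (μ : Measure α) [IsFiniteMeasure μ] (κ η : Kernel α β)
    [IsFiniteKernel κ] [IsFiniteKernel η] [MeasurableSpace.CountableOrCountablyGenerated α β] :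
    (μ ⊗ₘ κ).rnDeriv (μ ⊗ₘ η) =ᵐ[μ ⊗ₘ η] fun p ↦ κ.rnDeriv η p.1 p.2 := by
  refine (Measure.eq_rnDeriv (s := μ ⊗ₘ κ.singularPart η) (Kernel.measurable_rnDeriv κ η)
    (Measure.MutuallySingular.compProd_of_right μ μ
      (ae_of_all _ (Kernel.mutuallySingular_singularPart κ η))) ?_).symm
  conv_lhs => rw [← κ.rnDeriv_add_singularPart η]
  rw [Measure.compProd_add_right, Measure.compProd_withDensity (Kernel.measurable_rnDeriv κ η),
    add_comm]

lemma bind_prod_dirac_prod_eq_map_compProd (μ : Measure α) [IsFiniteMeasure μ]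
    (κ : Kernel α β) [IsFiniteKernel κ] (ζ : Kernel α γ) [IsFiniteKernel ζ] :
    μ.bind (fun x ↦ (κ x).prod ((Measure.dirac x).prod (ζ x)))
      = ((μ ⊗ₘ ζ) ⊗ₘ Kernel.prodMkRight γ κ).map MeasurableEquiv.prodComm := by
  have h_meas : Measurable fun x ↦ (κ x).prod ((Measure.dirac x).prod (ζ x)) := by
    convert (κ ×ₖ (Kernel.id ×ₖ ζ)).measurable using 2 with x
    rw [Kernel.prod_apply, Kernel.prod_apply, Kernel.id_apply]
  refine (Measure.ext_prod₃ fun {s t u} hs ht hu ↦ ?_).symm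
  have h_swap : MeasurableEquiv.prodComm ⁻¹' s ×ˢ t ×ˢ u = (t ×ˢ u) ×ˢ s :=
    preimage_swap_prod _ _
  calc ((μ ⊗ₘ ζ) ⊗ₘ Kernel.prodMkRight γ κ).map MeasurableEquiv.prodComm (s ×ˢ t ×ˢ u)
      = ∫⁻ x in t, ∫⁻ _ in u, κ x s ∂ζ x ∂μ := by
        rw [MeasurableEquiv.map_apply, h_swap, Measure.compProd_apply_prod (ht.prod hu) hs,
          Measure.setLIntegral_compProd (Kernel.measurable_coe _ hs) ht hu]
        rfl
    _ = ∫⁻ x, t.indicator (fun x ↦ κ x s * ζ x u) x ∂μ := by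
        simp_rw [setLIntegral_const, lintegral_indicator ht]
    _ = ∫⁻ x, (κ x).prod ((Measure.dirac x).prod (ζ x)) (s ×ˢ t ×ˢ u) ∂μ := by
        congr with x
        rw [Measure.prod_prod, Measure.prod_prod, Measure.dirac_apply' _ ht]
        by_cases hx : x ∈ t <;> simp [hx]
    _ = _ := (Measure.bind_apply (hs.prod (ht.prod hu)) h_meas.aemeasurable).symm

end ProbabilityTheory

namespace InformationTheory

-- In this namespace `klDiv` resolves to Mathlib's `InformationTheory.klDiv`.

variable {α β : Type*} [MeasurableSpace α] [MeasurableSpace β]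

lemma klDiv_map_measurableEquiv (e : α ≃ᵐ β) (μ ν : Measure α)
    [IsFiniteMeasure μ] [IsFiniteMeasure ν] :
    klDiv (μ.map e) (ν.map e) = klDiv μ ν := by
  refine le_antisymm (klDiv_map_le μ ν e.measurable) ?_
  calc klDiv μ ν = klDiv ((μ.map e).map e.symm) ((ν.map e).map e.symm) := by
        rw [e.map_symm_map, e.map_symm_map]
    _ ≤ klDiv (μ.map e) (ν.map e) := klDiv_map_le _ _ e.symm.measurable

theorem klDiv_compProd_right_eq_lintegral (μ : Measure α) [IsFiniteMeasure μ]
    (κ η : Kernel α β) [IsFiniteKernel κ] [IsFiniteKernel η]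
    [MeasurableSpace.CountableOrCountablyGenerated α β] :
    klDiv (μ ⊗ₘ κ) (μ ⊗ₘ η) = ∫⁻ a, klDiv (κ a) (η a) ∂μ := by
  by_cases h_ac : μ ⊗ₘ κ ≪ μ ⊗ₘ η
  · have h_ac_ae := Measure.absolutelyContinuous_compProd_right_iff.mp h_ac
    calc klDiv (μ ⊗ₘ κ) (μ ⊗ₘ η)
        = ∫⁻ p, ENNReal.ofReal (klFun ((μ ⊗ₘ κ).rnDeriv (μ ⊗ₘ η) p).toReal) ∂(μ ⊗ₘ η) :=
          klDiv_eq_lintegral_klFun_of_ac h_ac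
      _ = ∫⁻ p, ENNReal.ofReal (klFun (κ.rnDeriv η p.1 p.2).toReal) ∂(μ ⊗ₘ η) := by
          refine lintegral_congr_ae ?_
          filter_upwards [rnDeriv_measure_compProd_right μ κ η] with p hp
          rw [hp]
      _ = ∫⁻ a, ∫⁻ b, ENNReal.ofReal (klFun (κ.rnDeriv η a b).toReal) ∂η a ∂μ :=
          Measure.lintegral_compProd (by fun_prop)
      _ = ∫⁻ a, klDiv (κ a) (η a) ∂μ := by
          refine lintegral_congr_ae ?_
          filter_upwards [h_ac_ae] with a ha
          rw [klDiv_eq_lintegral_klFun_of_ac ha]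
          refine lintegral_congr_ae ?_
          filter_upwards [Kernel.rnDeriv_eq_rnDeriv_measure (κ := κ) (η := η) (a := a)] with b hb
          rw [hb]
  · rw [klDiv_of_not_ac h_ac, eq_comm, eq_top_iff]
    have h_sing : μ {a | κ a ≪ η a}ᶜ ≠ 0 := by
      rwa [Measure.absolutelyContinuous_compProd_right_iff, Filter.Eventually, mem_ae_iff] at h_ac
    calc ⊤ = ∫⁻ a, {a | κ a ≪ η a}ᶜ.indicator (fun _ ↦ ⊤) a ∂μ := by
          rw [lintegral_indicator_const (Kernel.measurableSet_absolutelyContinuous κ η).compl,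
            ENNReal.top_mul h_sing]
      _ ≤ ∫⁻ a, klDiv (κ a) (η a) ∂μ :=
          lintegral_mono (indicator_le fun a ha ↦ (klDiv_of_not_ac ha).ge)

end InformationTheory

theorem klDiv_epsilon_markov_characterization_general
    {Ω E₁ E₂ : Type*} [MeasurableSpace Ω]
    [MeasurableSpace E₁]
    [MeasurableSpace E₂] [StandardBorelSpace E₂] [Nonempty E₂]
    (P : Measure Ω) [IsProbabilityMeasure P]
    (Y : Ω → ℝ) (X : Ω → E₁) (Z : Ω → E₂)
    (hY : Measurable Y) (hX : Measurable X) (hZ : Measurable Z)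
    (ν : Measure (ℝ × E₁ × E₂))
    (hν : ν = (P.map X).bind fun x =>
      (condDistrib Y X P x).prod ((Measure.dirac x).prod (condDistrib Z X P x))) :
    klDiv (P.map fun ω => (Y ω, X ω, Z ω)) ν
      = ∫⁻ q, klDiv (condDistrib Y (fun ω => (X ω, Z ω)) P q) (condDistrib Y X P q.1)
          ∂(P.map fun ω => (X ω, Z ω)) := by
  have h_law : P.map (fun ω ↦ (Y ω, X ω, Z ω)) = (P.map (fun ω ↦ (X ω, Z ω)) ⊗ₘ
      condDistrib Y (fun ω ↦ (X ω, Z ω)) P).map MeasurableEquiv.prodComm := by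
    rw [compProd_map_condDistrib hY.aemeasurable, Measure.map_map (by fun_prop) (by fun_prop)]
    rfl
  have h_ref : ν = (P.map (fun ω ↦ (X ω, Z ω)) ⊗ₘ
      Kernel.prodMkRight E₂ (condDistrib Y X P)).map MeasurableEquiv.prodComm := by
    rw [hν, ← compProd_map_condDistrib hZ.aemeasurable, bind_prod_dirac_prod_eq_map_compProd]
  rw [h_law, h_ref, klDiv_eq_informationTheory_klDiv (by simp [MeasurableEquiv.map_apply]),
    InformationTheory.klDiv_map_measurableEquiv,
    InformationTheory.klDiv_compProd_right_eq_lintegral]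
  exact lintegral_congr fun q ↦ (klDiv_eq_informationTheory_klDiv (by simp)).symm

/-- KL-divergence characterization of the ε-Markov chain parameter: with
`ν = P_{Y|X} P_{Z|X} P_X` (first draw `x` from the law of `X`, then independently `y` from
`condDistrib Y X P x` and `z` from `condDistrib Z X P x`, arranged as `(y, x, z)`),
`KL( law(Y,X,Z) ‖ ν ) = ∫ KL( condDistrib Y (X,Z) P (x,z) ‖ condDistrib Y X P x ) d(law(X,Z))`. -/
theorem klDiv_epsilon_markov_characterization
    {Ω E₁ E₂ : Type*} [MeasurableSpace Ω]
    [MeasurableSpace E₁] [StandardBorelSpace E₁]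
    [MeasurableSpace E₂] [StandardBorelSpace E₂] [Nonempty E₂]
    (P : Measure Ω) [IsProbabilityMeasure P]
    (Y : Ω → ℝ) (X : Ω → E₁) (Z : Ω → E₂)
    (hY : Measurable Y) (hX : Measurable X) (hZ : Measurable Z)
    (ν : Measure (ℝ × E₁ × E₂))
    (hν : ν = (P.map X).bind fun x =>
      (condDistrib Y X P x).prod ((Measure.dirac x).prod (condDistrib Z X P x))) :
    klDiv (P.map fun ω => (Y ω, X ω, Z ω)) ν
      = ∫⁻ q, klDiv (condDistrib Y (fun ω => (X ω, Z ω)) P q) (condDistrib Y X P q.1)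
          ∂(P.map fun ω => (X ω, Z ω)) :=
  klDiv_epsilon_markov_characterization_general P Y X Z hY hX hZ ν hν
end
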